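/- arXiv:1204.6302 — 2 statements merged into one kernel-verified Lean document; each statement's English description precedes it below -/
import Mathlib

section
/- Let A be an n×n nonnegative real matrix with all row sums nonzero. Then for any integer L > 0, every k ≥ 0, and every i ∈ {1,…,n}, min_{1≤j≤n} r_j(A^{k+L})/r_j(A^k) ≤ r_i(A^{k+1+L})/r_i(A^{k+1}) ≤ max_{1≤j≤n} r_j(A^{k+L})/r_j(A^k). In particular, as functions of k, the upper and lower bounds max_j r_j(A^{k+L})/r_j(A^k) and min_j r_j(A^{k+L})/r_j(A^k) are monotonically non-increasing and non-decreasing, respectively. -/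
open Matrix

/-- The spectral radius of a real square matrix: the maximum modulus of its
complex eigenvalues (elements of the spectrum of the matrix over `ℂ`). -/
noncomputable def specRad {n : ℕ} (A : Matrix (Fin n) (Fin n) ℝ) : ℝ :=
  sSup ((fun μ : ℂ => ‖μ‖) '' spectrum ℂ (A.map (fun x : ℝ => (x : ℂ))))

/-- `rowSum A i` is the `i`-th row sum of `A`. -/
noncomputable def rowSum {n : ℕ} (A : Matrix (Fin n) (Fin n) ℝ) (i : Fin n) : ℝ :=
  ∑ j, A i j

/-- A square matrix is irreducible if it cannot be symmetrically permuted to a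
nontrivial block upper-triangular form; equivalently, for every nonempty proper
subset `S` of indices there is a nonzero entry leading from `S` to its complement. -/
def IsIrred {n : ℕ} (A : Matrix (Fin n) (Fin n) ℝ) : Prop :=
  ∀ S : Set (Fin n), S.Nonempty → S ≠ Set.univ → ∃ i ∈ S, ∃ j ∈ Sᶜ, A i j ≠ 0

open Finset

/-
Since `A^(k+1+L) = A * A^(k+L)` and `A^(k+1) = A * A^k`, the `i`-th row sums of these powers are
`∑ j, A i j * r_j(A^(k+L))` and `∑ j, A i j * r_j(A^k)`: a quotient of two sums with the same
nonnegative weights `A i j`, hence a mediant of the ratios `r_j(A^(k+L)) / r_j(A^k)`, which lies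
between their minimum and maximum. All the row sums involved are positive, by induction on the
power.
-/

section Mediant

variable {ι : Type*} {s : Finset ι} {w a b : ι → ℝ} {c : ℝ}

theorem mul_sum_le_sum_of_le_div (hw : ∀ j ∈ s, 0 ≤ w j) (hb : ∀ j ∈ s, 0 < b j)
    (hc : ∀ j ∈ s, c ≤ a j / b j) : c * ∑ j ∈ s, w j * b j ≤ ∑ j ∈ s, w j * a j := by
  rw [mul_sum]
  refine sum_le_sum fun j hj => ?_
  calc c * (w j * b j) = w j * (c * b j) := by ring
    _ ≤ w j * a j := mul_le_mul_of_nonneg_left ((le_div_iff₀ (hb j hj)).mp (hc j hj)) (hw j hj)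

theorem sum_le_mul_sum_of_div_le (hw : ∀ j ∈ s, 0 ≤ w j) (hb : ∀ j ∈ s, 0 < b j)
    (hc : ∀ j ∈ s, a j / b j ≤ c) : ∑ j ∈ s, w j * a j ≤ c * ∑ j ∈ s, w j * b j := by
  rw [mul_sum]
  refine sum_le_sum fun j hj => ?_
  calc w j * a j ≤ w j * (c * b j) :=
        mul_le_mul_of_nonneg_left ((div_le_iff₀ (hb j hj)).mp (hc j hj)) (hw j hj)
    _ = c * (w j * b j) := by ring

end Mediant

section RowSum

variable {n : ℕ} {A B C : Matrix (Fin n) (Fin n) ℝ}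

variable (A B) in
theorem rowSum_mul (i : Fin n) :
    rowSum (A * B) i = ∑ j, A i j * rowSum B j := by
  simp only [rowSum, mul_apply, mul_sum]
  exact sum_comm

theorem rowSum_pos_of_nonneg (hA : ∀ i j, 0 ≤ A i j) (hr : ∀ i, rowSum A i ≠ 0) (i : Fin n) :
    0 < rowSum A i :=
  (sum_nonneg fun j _ => hA i j).lt_of_ne (hr i).symm

theorem rowSum_mul_pos (hA : ∀ i j, 0 ≤ A i j) (hr : ∀ i, rowSum A i ≠ 0)
    (hB : ∀ j, 0 < rowSum B j) (i : Fin n) : 0 < rowSum (A * B) i := by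
  obtain ⟨j, -, hj⟩ : ∃ j ∈ univ, (0 : ℝ) < A i j :=
    exists_lt_of_sum_lt (by simpa [rowSum] using rowSum_pos_of_nonneg hA hr i)
  rw [rowSum_mul]
  exact sum_pos' (fun j _ => mul_nonneg (hA i j) (hB j).le) ⟨j, mem_univ j, mul_pos hj (hB j)⟩

theorem rowSum_pow_pos (hA : ∀ i j, 0 ≤ A i j) (hr : ∀ i, rowSum A i ≠ 0) (k : ℕ) (i : Fin n) :
    0 < rowSum (A ^ k) i := by
  induction k generalizing i with
  | zero => simp [rowSum, one_apply]
  | succ k ih => rw [pow_succ']; exact rowSum_mul_pos hA hr ih i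

theorem le_rowSum_mul_div (hA : ∀ i j, 0 ≤ A i j) (hC : ∀ j, 0 < rowSum C j)
    (hAC : 0 < rowSum (A * C) i) {c : ℝ} (hc : ∀ j, c ≤ rowSum B j / rowSum C j) :
    c ≤ rowSum (A * B) i / rowSum (A * C) i := by
  rw [le_div_iff₀ hAC, rowSum_mul, rowSum_mul]
  exact mul_sum_le_sum_of_le_div (fun j _ => hA i j) (fun j _ => hC j) fun j _ => hc j

theorem rowSum_mul_div_le (hA : ∀ i j, 0 ≤ A i j) (hC : ∀ j, 0 < rowSum C j)
    (hAC : 0 < rowSum (A * C) i) {c : ℝ} (hc : ∀ j, rowSum B j / rowSum C j ≤ c) :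
    rowSum (A * B) i / rowSum (A * C) i ≤ c := by
  rw [div_le_iff₀ hAC, rowSum_mul, rowSum_mul]
  exact sum_le_mul_sum_of_div_le (fun j _ => hA i j) (fun j _ => hC j) fun j _ => hc j

end RowSum

theorem stmt5_general {n : ℕ} [NeZero n] (A : Matrix (Fin n) (Fin n) ℝ)
    (hA : ∀ i j, 0 ≤ A i j) (hr : ∀ i, rowSum A i ≠ 0) (L : ℕ) :
    (∀ k : ℕ, ∀ i : Fin n,
      Finset.univ.inf' Finset.univ_nonempty
          (fun j => rowSum (A ^ (k + L)) j / rowSum (A ^ k) j) ≤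
        rowSum (A ^ (k + 1 + L)) i / rowSum (A ^ (k + 1)) i ∧
      rowSum (A ^ (k + 1 + L)) i / rowSum (A ^ (k + 1)) i ≤
        Finset.univ.sup' Finset.univ_nonempty
          (fun j => rowSum (A ^ (k + L)) j / rowSum (A ^ k) j)) ∧
    (∀ k : ℕ,
      Finset.univ.sup' Finset.univ_nonempty
          (fun j => rowSum (A ^ (k + 1 + L)) j / rowSum (A ^ (k + 1)) j) ≤
        Finset.univ.sup' Finset.univ_nonempty
          (fun j => rowSum (A ^ (k + L)) j / rowSum (A ^ k) j) ∧
      Finset.univ.inf' Finset.univ_nonempty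
          (fun j => rowSum (A ^ (k + L)) j / rowSum (A ^ k) j) ≤
        Finset.univ.inf' Finset.univ_nonempty
          (fun j => rowSum (A ^ (k + 1 + L)) j / rowSum (A ^ (k + 1)) j)) := by
  have hpos := rowSum_pow_pos hA hr
  have bounds : ∀ k i,
      univ.inf' univ_nonempty (fun j => rowSum (A ^ (k + L)) j / rowSum (A ^ k) j) ≤
        rowSum (A ^ (k + 1 + L)) i / rowSum (A ^ (k + 1)) i ∧
      rowSum (A ^ (k + 1 + L)) i / rowSum (A ^ (k + 1)) i ≤
        univ.sup' univ_nonempty (fun j => rowSum (A ^ (k + L)) j / rowSum (A ^ k) j) := by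
    intro k i
    rw [add_right_comm, pow_succ' A (k + L), pow_succ' A k]
    have hden : 0 < rowSum (A * A ^ k) i := pow_succ' A k ▸ hpos (k + 1) i
    let ratio j := rowSum (A ^ (k + L)) j / rowSum (A ^ k) j
    exact ⟨le_rowSum_mul_div hA (hpos k) hden fun j => inf'_le ratio (mem_univ j),
      rowSum_mul_div_le hA (hpos k) hden fun j => le_sup' ratio (mem_univ j)⟩
  exact ⟨bounds, fun k => ⟨sup'_le _ _ fun i _ => (bounds k i).2,
    le_inf' _ _ fun i _ => (bounds k i).1⟩⟩

/-- Theorem 5 of the paper — monotonicity of Liu's bounds in `k`.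
For a nonnegative matrix `A` with all row sums nonzero, any `L > 0`, `k ≥ 0` and any `i`,
`min_j r_j(A^{k+L})/r_j(A^k) ≤ r_i(A^{k+1+L})/r_i(A^{k+1}) ≤ max_j r_j(A^{k+L})/r_j(A^k)`;
hence the upper and lower bounds are monotonically non-increasing resp. non-decreasing in `k`. -/
theorem stmt5 {n : ℕ} [NeZero n] (A : Matrix (Fin n) (Fin n) ℝ)
    (hA : ∀ i j, 0 ≤ A i j) (hr : ∀ i, rowSum A i ≠ 0) (L : ℕ) (hL : 0 < L) :
    (∀ k : ℕ, ∀ i : Fin n,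
      Finset.univ.inf' Finset.univ_nonempty
          (fun j => rowSum (A ^ (k + L)) j / rowSum (A ^ k) j) ≤
        rowSum (A ^ (k + 1 + L)) i / rowSum (A ^ (k + 1)) i ∧
      rowSum (A ^ (k + 1 + L)) i / rowSum (A ^ (k + 1)) i ≤
        Finset.univ.sup' Finset.univ_nonempty
          (fun j => rowSum (A ^ (k + L)) j / rowSum (A ^ k) j)) ∧
    (∀ k : ℕ,
      Finset.univ.sup' Finset.univ_nonempty
          (fun j => rowSum (A ^ (k + 1 + L)) j / rowSum (A ^ (k + 1)) j) ≤
        Finset.univ.sup' Finset.univ_nonempty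
          (fun j => rowSum (A ^ (k + L)) j / rowSum (A ^ k) j) ∧
      Finset.univ.inf' Finset.univ_nonempty
          (fun j => rowSum (A ^ (k + L)) j / rowSum (A ^ k) j) ≤
        Finset.univ.inf' Finset.univ_nonempty
          (fun j => rowSum (A ^ (k + 1 + L)) j / rowSum (A ^ (k + 1)) j)) :=
  stmt5_general A hA hr L
end

section
/- Let A = (a_{ij}) be an n×n nonnegative real matrix whose row sums r_1(A),…,r_n(A) are all nonzero, and let α be a real number with 0 ≤ α ≤ 1. Then min over pairs (i,j) with a_{ij} > 0 of r_i(A)^α · r_j(A)^{1−α} ≤ ρ(A) ≤ max over pairs (i,j) with a_{ij} > 0 of r_i(A)^α · r_j(A)^{1−α}. -/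
open Matrix

/-!
Let `m`, `M` be the extreme values of `r_i^α r_j^(1-α)` over `a_ij > 0`, and put
`x_j = r_j(A) ^ (1 - α) > 0`. Whenever `a_ij > 0`, the bound `m ≤ r_i^α r_j^(1-α) ≤ M` reads
`m x_i / r_i ≤ x_j ≤ M x_i / r_i`; averaging over row `i` with weights `a_ij` gives
`m x ≤ A x ≤ M x`. For `D = diag x`, the nonnegative matrix `D⁻¹ A D` has the spectrum of `A` and
row sums in `[m, M]`. In the `ℓ∞` operator norm this bounds `‖D⁻¹ A D‖` by `M`, and bounds
`‖(D⁻¹ A D) ^ k‖` below by `m ^ k`, so Gelfand's formula gives `m ≤ ρ(A) ≤ M`.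
-/

section BanachAlgebra

variable {𝔸 : Type*} [NormedRing 𝔸] [NormedAlgebra ℂ 𝔸] [CompleteSpace 𝔸]

theorem ofReal_le_spectralRadius_of_pow_le_norm_pow (a : 𝔸) {m : ℝ} (hm : 0 ≤ m)
    (h : ∀ k : ℕ, m ^ k ≤ ‖a ^ k‖) : ENNReal.ofReal m ≤ spectralRadius ℂ a := by
  refine ge_of_tendsto (spectrum.pow_norm_pow_one_div_tendsto_nhds_spectralRadius a) ?_
  filter_upwards [Filter.eventually_ne_atTop 0] with k hk
  refine ENNReal.ofReal_le_ofReal ?_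
  calc m = (m ^ k) ^ (1 / k : ℝ) := by rw [one_div, Real.pow_rpow_inv_natCast hm hk]
    _ ≤ ‖a ^ k‖ ^ (1 / k : ℝ) := by gcongr; exact h k

theorem le_sSup_norm_spectrum_of_pow_le_norm_pow [Nontrivial 𝔸] (a : 𝔸) {m : ℝ} (hm : 0 ≤ m)
    (h : ∀ k : ℕ, m ^ k ≤ ‖a ^ k‖) : m ≤ sSup ((‖·‖) '' spectrum ℂ a) := by
  obtain ⟨z, hz, hzρ⟩ := spectrum.exists_nnnorm_eq_spectralRadius a
  have hmz : ENNReal.ofReal m ≤ ‖z‖₊ := hzρ ▸ ofReal_le_spectralRadius_of_pow_le_norm_pow a hm h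
  calc m ≤ ‖z‖ := ENNReal.ofReal_le_coe.1 hmz
    _ ≤ sSup ((‖·‖) '' spectrum ℂ a) :=
      le_csSup ((spectrum.isCompact a).image continuous_norm).bddAbove ⟨z, hz, rfl⟩

theorem sSup_norm_spectrum_le_norm_mul_norm_one (a : 𝔸) :
    sSup ((‖·‖) '' spectrum ℂ a) ≤ ‖a‖ * ‖(1 : 𝔸)‖ :=
  Real.sSup_le (by rintro _ ⟨μ, hμ, rfl⟩; exact spectrum.norm_le_norm_mul_of_mem hμ)
    (by positivity)

end BanachAlgebra

section NonnegMatrix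

variable {ι : Type*} [Fintype ι]

theorem Matrix.mulVec_le_mulVec_of_nonneg {C : Matrix ι ι ℝ} (hC : ∀ i j, 0 ≤ C i j)
    {v w : ι → ℝ} (hvw : v ≤ w) : C *ᵥ v ≤ C *ᵥ w := fun i =>
  Finset.sum_le_sum fun j _ => mul_le_mul_of_nonneg_left (hvw j) (hC i j)

theorem Matrix.pow_smul_one_le_pow_mulVec_one [DecidableEq ι] {C : Matrix ι ι ℝ}
    (hC : ∀ i j, 0 ≤ C i j) {m : ℝ} (hm : 0 ≤ m) (h : m • 1 ≤ C *ᵥ 1) (k : ℕ) :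
    m ^ k • 1 ≤ (C ^ k) *ᵥ 1 := by
  induction k with
  | zero => simp
  | succ k ih =>
    calc m ^ (k + 1) • (1 : ι → ℝ) = m ^ k • (m • 1) := by rw [pow_succ, mul_smul]
      _ ≤ m ^ k • (C *ᵥ 1) := smul_le_smul_of_nonneg_left h (pow_nonneg hm k)
      _ = C *ᵥ (m ^ k • 1) := (mulVec_smul C _ 1).symm
      _ ≤ C *ᵥ ((C ^ k) *ᵥ 1) := mulVec_le_mulVec_of_nonneg hC ih
      _ = (C ^ (k + 1)) *ᵥ 1 := by rw [mulVec_mulVec, pow_succ']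

end NonnegMatrix

section DiagonalSimilarity

variable {ι : Type*} [Fintype ι] [DecidableEq ι]

theorem Matrix.spectrum_diagonal_inv_mul_mul_diagonal {K : Type*} [Field K] (B : Matrix ι ι K)
    {d : ι → K} (hd : ∀ i, d i ≠ 0) : spectrum K (diagonal d⁻¹ * B * diagonal d) = spectrum K B :=
  spectrum.units_conjugate' (u := ⟨diagonal d, diagonal d⁻¹, by simp [hd], by simp [hd]⟩)

theorem Matrix.diagonal_inv_mul_mul_diagonal_apply {K : Type*} [Field K] (A : Matrix ι ι K)
    (x : ι → K) (i j : ι) :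
    (diagonal x⁻¹ * A * diagonal x) i j = (x i)⁻¹ * A i j * x j := by
  simp [diagonal_mul, mul_diagonal]

theorem Matrix.diagonal_inv_mul_mul_diagonal_mulVec_one {K : Type*} [Field K] (A : Matrix ι ι K)
    (x : ι → K) :
    (diagonal x⁻¹ * A * diagonal x) *ᵥ 1 = x⁻¹ * (A *ᵥ x) := by
  have hx : diagonal x *ᵥ 1 = x := by ext j; simp [mulVec_diagonal]
  ext i
  simp [← mulVec_mulVec, hx, mulVec_diagonal]

theorem Matrix.diagonal_inv_mul_mul_diagonal_nonneg {A : Matrix ι ι ℝ} (hA : ∀ i j, 0 ≤ A i j)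
    {x : ι → ℝ} (hx : ∀ i, 0 < x i) (i j : ι) : 0 ≤ (diagonal x⁻¹ * A * diagonal x) i j := by
  rw [diagonal_inv_mul_mul_diagonal_apply]
  have := hx i; have := hx j; have := hA i j
  positivity

end DiagonalSimilarity

section LinftyNorm

attribute [local instance] Matrix.linftyOpNormedAddCommGroup Matrix.linftyOpNormedRing
  Matrix.linftyOpNormedAlgebra

variable {ι : Type*} [Fintype ι]

theorem Matrix.linfty_opNorm_map_ofReal (C : Matrix ι ι ℝ) :
    ‖C.map ((↑) : ℝ → ℂ)‖ = ‖C‖ := by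
  simp only [linfty_opNorm_def, map_apply, Complex.nnnorm_real]

theorem Matrix.linfty_opNorm_one_le [DecidableEq ι] {α : Type*} [NormedRing α] [NormOneClass α] :
    ‖(1 : Matrix ι ι α)‖ ≤ 1 := by
  rw [← diagonal_one, linfty_opNorm_diagonal]
  exact (pi_norm_const_le 1).trans norm_one.le

theorem Matrix.le_linfty_opNorm_of_smul_one_le_mulVec [Nonempty ι] {C : Matrix ι ι ℝ} {m : ℝ}
    (h : m • 1 ≤ C *ᵥ 1) : m ≤ ‖C‖ := by
  obtain ⟨i⟩ := ‹Nonempty ι›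
  calc m ≤ (C *ᵥ 1) i := by simpa using h i
    _ ≤ ‖C *ᵥ 1‖ := (Real.le_norm_self _).trans (norm_le_pi_norm _ i)
    _ ≤ ‖C‖ * ‖(1 : ι → ℝ)‖ := linfty_opNorm_mulVec C 1
    _ = ‖C‖ := by rw [norm_one, mul_one]

theorem Matrix.linfty_opNorm_le_of_mulVec_one_le_smul_one {C : Matrix ι ι ℝ}
    (hC : ∀ i j, 0 ≤ C i j) {M : ℝ} (hM : 0 ≤ M) (h : C *ᵥ 1 ≤ M • 1) : ‖C‖ ≤ M := by
  rw [linfty_opNorm_def, ← NNReal.coe_mk M hM, NNReal.coe_le_coe, Finset.sup_le_iff]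
  intro i _
  rw [← NNReal.coe_le_coe, NNReal.coe_sum]
  simpa [mulVec, dotProduct, abs_of_nonneg (hC i _)] using h i

variable {n : ℕ}

theorem le_specRad_of_smul_one_le_mulVec [NeZero n] {C : Matrix (Fin n) (Fin n) ℝ}
    (hC : ∀ i j, 0 ≤ C i j) {m : ℝ} (hm : 0 ≤ m) (h : m • 1 ≤ C *ᵥ 1) : m ≤ specRad C := by
  refine le_sSup_norm_spectrum_of_pow_le_norm_pow _ hm fun k => ?_
  have hk : (C.map ((↑) : ℝ → ℂ)) ^ k = (C ^ k).map (↑) := (C.map_pow Complex.ofRealHom k).symm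
  rw [hk, linfty_opNorm_map_ofReal]
  exact le_linfty_opNorm_of_smul_one_le_mulVec (pow_smul_one_le_pow_mulVec_one hC hm h k)

theorem specRad_le_of_mulVec_one_le_smul_one {C : Matrix (Fin n) (Fin n) ℝ}
    (hC : ∀ i j, 0 ≤ C i j) {M : ℝ} (hM : 0 ≤ M) (h : C *ᵥ 1 ≤ M • 1) : specRad C ≤ M :=
  calc specRad C ≤ ‖C.map ((↑) : ℝ → ℂ)‖ * ‖(1 : Matrix (Fin n) (Fin n) ℂ)‖ :=
        sSup_norm_spectrum_le_norm_mul_norm_one _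
    _ ≤ M * 1 := by
        rw [linfty_opNorm_map_ofReal]
        gcongr
        · exact linfty_opNorm_le_of_mulVec_one_le_smul_one hC hM h
        · exact linfty_opNorm_one_le
    _ = M := mul_one M

end LinftyNorm

theorem specRad_nonneg {n : ℕ} (A : Matrix (Fin n) (Fin n) ℝ) : 0 ≤ specRad A :=
  Real.sSup_nonneg (by rintro _ ⟨μ, -, rfl⟩; exact norm_nonneg μ)

theorem specRad_diagonal_inv_mul_mul_diagonal {n : ℕ} (A : Matrix (Fin n) (Fin n) ℝ)
    {x : Fin n → ℝ} (hx : ∀ i, x i ≠ 0) : specRad (diagonal x⁻¹ * A * diagonal x) = specRad A := by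
  unfold specRad
  rw [← (A.map _).spectrum_diagonal_inv_mul_mul_diagonal (d := fun i => (x i : ℂ))
    (by simpa using hx)]
  congr 3
  ext i j
  simp [diagonal_mul, mul_diagonal]

section CollatzWielandt

variable {n : ℕ} {A : Matrix (Fin n) (Fin n) ℝ} {x : Fin n → ℝ}

theorem le_specRad_of_smul_le_mulVec [NeZero n] (hA : ∀ i j, 0 ≤ A i j) (hx : ∀ i, 0 < x i)
    {m : ℝ} (hm : 0 ≤ m) (h : m • x ≤ A *ᵥ x) : m ≤ specRad A := by
  rw [← specRad_diagonal_inv_mul_mul_diagonal A fun i => (hx i).ne']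
  refine le_specRad_of_smul_one_le_mulVec (diagonal_inv_mul_mul_diagonal_nonneg hA hx) hm
    fun i => ?_
  rw [diagonal_inv_mul_mul_diagonal_mulVec_one]
  simpa [le_inv_mul_iff₀ (hx i), mul_comm (x i)] using h i

theorem specRad_le_of_mulVec_le_smul (hA : ∀ i j, 0 ≤ A i j) (hx : ∀ i, 0 < x i)
    {M : ℝ} (hM : 0 ≤ M) (h : A *ᵥ x ≤ M • x) : specRad A ≤ M := by
  rw [← specRad_diagonal_inv_mul_mul_diagonal A fun i => (hx i).ne']
  refine specRad_le_of_mulVec_one_le_smul_one (diagonal_inv_mul_mul_diagonal_nonneg hA hx) hM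
    fun i => ?_
  rw [diagonal_inv_mul_mul_diagonal_mulVec_one]
  simpa [inv_mul_le_iff₀ (hx i), mul_comm (x i)] using h i

end CollatzWielandt

theorem Finset.sum_mul_le_sum_mul_of_pos {ι : Type*} [Fintype ι] {a f g : ι → ℝ}
    (ha : ∀ j, 0 ≤ a j) (h : ∀ j, 0 < a j → f j ≤ g j) : ∑ j, a j * f j ≤ ∑ j, a j * g j :=
  Finset.sum_le_sum fun j _ => (ha j).eq_or_lt.elim (fun h0 => by simp [← h0])
    fun hpos => mul_le_mul_of_nonneg_left (h j hpos) hpos.le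

theorem Real.mul_div_rpow_eq_mul_rpow_one_sub {r : ℝ} (hr : 0 < r) (c α : ℝ) :
    r * (c / r ^ α) = c * r ^ (1 - α) := by
  rw [Real.rpow_sub hr, Real.rpow_one]
  ring

section RowSumWeights

variable {n : ℕ} {A : Matrix (Fin n) (Fin n) ℝ}

theorem smul_rpow_rowSum_le_mulVec (hA : ∀ i j, 0 ≤ A i j) (hr : ∀ i, 0 < rowSum A i) (α : ℝ)
    {m : ℝ} (h : ∀ i j, 0 < A i j → m ≤ rowSum A i ^ α * rowSum A j ^ (1 - α)) :
    m • (fun j => rowSum A j ^ (1 - α)) ≤ A *ᵥ fun j => rowSum A j ^ (1 - α) := fun i =>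
  calc m * rowSum A i ^ (1 - α) = ∑ j, A i j * (m / rowSum A i ^ α) := by
        rw [← Finset.sum_mul, ← Real.mul_div_rpow_eq_mul_rpow_one_sub (hr i)]
        rfl
    _ ≤ ∑ j, A i j * rowSum A j ^ (1 - α) :=
        Finset.sum_mul_le_sum_mul_of_pos (hA i) fun j hij =>
          (div_le_iff₀' (Real.rpow_pos_of_pos (hr i) α)).2 (h i j hij)

theorem mulVec_rpow_rowSum_le_smul (hA : ∀ i j, 0 ≤ A i j) (hr : ∀ i, 0 < rowSum A i) (α : ℝ)
    {M : ℝ} (h : ∀ i j, 0 < A i j → rowSum A i ^ α * rowSum A j ^ (1 - α) ≤ M) :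
    (A *ᵥ fun j => rowSum A j ^ (1 - α)) ≤ M • fun j => rowSum A j ^ (1 - α) := fun i =>
  calc ∑ j, A i j * rowSum A j ^ (1 - α) ≤ ∑ j, A i j * (M / rowSum A i ^ α) :=
        Finset.sum_mul_le_sum_mul_of_pos (hA i) fun j hij =>
          (le_div_iff₀' (Real.rpow_pos_of_pos (hr i) α)).2 (h i j hij)
    _ = M * rowSum A i ^ (1 - α) := by
        rw [← Finset.sum_mul, ← Real.mul_div_rpow_eq_mul_rpow_one_sub (hr i)]
        rfl

end RowSumWeights

theorem stmt8_general {n : ℕ} (A : Matrix (Fin n) (Fin n) ℝ)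
    (hA : ∀ i j, 0 ≤ A i j) (hr : ∀ i, rowSum A i ≠ 0) (α : ℝ) :
    sInf {x : ℝ | ∃ i j : Fin n, 0 < A i j ∧
        x = rowSum A i ^ α * rowSum A j ^ (1 - α)} ≤ specRad A ∧
    specRad A ≤ sSup {x : ℝ | ∃ i j : Fin n, 0 < A i j ∧
        x = rowSum A i ^ α * rowSum A j ^ (1 - α)} := by
  set S := {x : ℝ | ∃ i j : Fin n, 0 < A i j ∧ x = rowSum A i ^ α * rowSum A j ^ (1 - α)}
  have hrpos : ∀ i, 0 < rowSum A i := fun i =>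
    (Finset.sum_nonneg fun j _ => hA i j).lt_of_ne' (hr i)
  have hS : S.Finite := (Set.finite_range fun p : Fin n × Fin n =>
    rowSum A p.1 ^ α * rowSum A p.2 ^ (1 - α)).subset
      (by rintro _ ⟨i, j, -, rfl⟩; exact ⟨(i, j), rfl⟩)
  have hS0 : ∀ y ∈ S, 0 ≤ y := by
    rintro _ ⟨i, j, -, rfl⟩
    have := hrpos i; have := hrpos j
    positivity
  have hw : ∀ j, 0 < rowSum A j ^ (1 - α) := fun j => Real.rpow_pos_of_pos (hrpos j) _
  refine ⟨?_, specRad_le_of_mulVec_le_smul hA hw (Real.sSup_nonneg hS0)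
    (mulVec_rpow_rowSum_le_smul hA hrpos α fun i j hij => le_csSup hS.bddAbove ⟨i, j, hij, rfl⟩)⟩
  obtain rfl | hn := n.eq_zero_or_pos
  · rw [Set.eq_empty_of_forall_notMem (s := S) (by rintro _ ⟨i, -⟩; exact i.elim0),
      Real.sInf_empty]
    exact specRad_nonneg A
  have : NeZero n := ⟨hn.ne'⟩
  exact le_specRad_of_smul_le_mulVec hA hw (Real.sInf_nonneg hS0)
    (smul_rpow_rowSum_le_mulVec hA hrpos α fun i j hij => csInf_le hS.bddBelow ⟨i, j, hij, rfl⟩)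

/-- Theorem 6 of the paper — Kolotilina's bound.
For a nonnegative matrix `A` with all row sums nonzero and `0 ≤ α ≤ 1`,
`min_{(i,j): a_{ij}>0} r_i(A)^α r_j(A)^{1-α} ≤ ρ(A) ≤ max_{(i,j): a_{ij}>0} r_i(A)^α r_j(A)^{1-α}`. -/
theorem stmt8 {n : ℕ} (A : Matrix (Fin n) (Fin n) ℝ)
    (hA : ∀ i j, 0 ≤ A i j) (hr : ∀ i, rowSum A i ≠ 0) (α : ℝ) (hα0 : 0 ≤ α) (hα1 : α ≤ 1) :
    sInf {x : ℝ | ∃ i j : Fin n, 0 < A i j ∧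
        x = rowSum A i ^ α * rowSum A j ^ (1 - α)} ≤ specRad A ∧
    specRad A ≤ sSup {x : ℝ | ∃ i j : Fin n, 0 < A i j ∧
        x = rowSum A i ^ α * rowSum A j ^ (1 - α)} :=
  stmt8_general A hA hr α
end
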